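/- arXiv:1709.07836 — 2 statements merged into one kernel-verified Lean document; each statement's English description precedes it below -/
import Mathlib

section
/- Non-Abelian conservation law: for arbitrary smooth B_μ : ℝ^m → A, define F_{μν} := ∂_μ B_ν − ∂_ν B_μ − [B_μ, B_ν] and J^ν := Σ_μ (∂_μ F^{μν} − [B_μ, F^{μν}]). Then Σ_ν (∂_ν J^ν − [B_ν, J^ν]) = 0. -/
/-- Partial derivative in the μ-th coordinate direction. -/
noncomputable def pdv {m : ℕ} {A : Type*} [NormedAddCommGroup A] [NormedSpace ℝ A]
    (μ : Fin m) (f : (Fin m → ℝ) → A) (x : Fin m → ℝ) : A :=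
  fderiv ℝ f x (Pi.single μ 1)

section lemmas
variable {m : ℕ} {A : Type*} [NormedRing A] [NormedAlgebra ℝ A]
  {f g : (Fin m → ℝ) → A} {x : Fin m → ℝ} {μ ν : Fin m}

lemma pdv_contDiff (hf : ContDiff ℝ (⊤ : ℕ∞) f) (μ : Fin m) : ContDiff ℝ (⊤ : ℕ∞) (pdv μ f) := by
  have h1 : ContDiff ℝ (⊤ : ℕ∞) (fderiv ℝ f) := hf.fderiv_right (by simp)
  exact (ContinuousLinearMap.apply ℝ A (Pi.single μ 1)).contDiff.comp h1

lemma pdv_sub (hf : DifferentiableAt ℝ f x) (hg : DifferentiableAt ℝ g x) :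
    pdv μ (fun y => f y - g y) x = pdv μ f x - pdv μ g x := by
  simp [pdv, fderiv_fun_sub hf hg]

lemma pdv_mul (hf : DifferentiableAt ℝ f x) (hg : DifferentiableAt ℝ g x) :
    pdv μ (fun y => f y * g y) x = f x * pdv μ g x + pdv μ f x * g x := by
  simp [pdv, fderiv_fun_mul' hf hg, smul_eq_mul]

lemma pdv_smul (c : ℝ) (hf : DifferentiableAt ℝ f x) :
    pdv μ (fun y => c • f y) x = c • pdv μ f x := by
  simp [pdv, fderiv_fun_const_smul hf c]

lemma pdv_sum {ι : Type*} (s : Finset ι) (f : ι → (Fin m → ℝ) → A)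
    (hf : ∀ i ∈ s, DifferentiableAt ℝ (f i) x) :
    pdv μ (fun y => ∑ i ∈ s, f i y) x = ∑ i ∈ s, pdv μ (f i) x := by
  simp [pdv, fderiv_fun_sum hf]

lemma pdv_comm (hf : ContDiff ℝ (⊤ : ℕ∞) f) :
    pdv ν (pdv μ f) x = pdv μ (pdv ν f) x := by
  have h1 : ContDiff ℝ (⊤ : ℕ∞) (fderiv ℝ f) := hf.fderiv_right (by simp)
  have hsym : IsSymmSndFDerivAt ℝ f x := hf.contDiffAt.isSymmSndFDerivAt (by
    rw [minSmoothness_of_isRCLikeNormedField]; exact WithTop.coe_le_coe.mpr le_top)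
  have key : ∀ σ τ : Fin m, pdv σ (pdv τ f) x
      = fderiv ℝ (fderiv ℝ f) x (Pi.single σ 1) (Pi.single τ 1) := by
    intro σ τ
    have hd : HasFDerivAt (fderiv ℝ f) (fderiv ℝ (fderiv ℝ f) x) x :=
      (h1.differentiable (by simp) x).hasFDerivAt
    have hcomp := ((ContinuousLinearMap.apply ℝ A (Pi.single τ 1)).hasFDerivAt
      (x := fderiv ℝ f x)).comp x hd
    have heq : pdv τ f = (ContinuousLinearMap.apply ℝ A (Pi.single τ 1)) ∘ (fderiv ℝ f) := rfl
    rw [pdv, heq, hcomp.fderiv]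
    simp
  rw [key, key, hsym]
end lemmas

section cov
variable {m : ℕ} {A : Type*} [NormedRing A] [NormedAlgebra ℝ A]

/-- Covariant derivative. -/
noncomputable def Dc (B : Fin m → (Fin m → ℝ) → A) (σ : Fin m)
    (g : (Fin m → ℝ) → A) : (Fin m → ℝ) → A :=
  fun y => pdv σ g y - (B σ y * g y - g y * B σ y)

variable {B : Fin m → (Fin m → ℝ) → A} {f g : (Fin m → ℝ) → A} {x : Fin m → ℝ} {μ ν σ : Fin m}

lemma Dc_contDiff (hB : ∀ σ, ContDiff ℝ (⊤ : ℕ∞) (B σ)) (hg : ContDiff ℝ (⊤ : ℕ∞) g) :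
    ContDiff ℝ (⊤ : ℕ∞) (Dc B σ g) :=
  (pdv_contDiff hg σ).sub (((hB σ).mul hg).sub (hg.mul (hB σ)))

lemma Dc_neg (hB : ∀ σ, ContDiff ℝ (⊤ : ℕ∞) (B σ)) (hg : ContDiff ℝ (⊤ : ℕ∞) g) :
    Dc B σ (fun y => -g y) = fun y => -Dc B σ g y := by
  funext y
  have h1 : pdv σ (fun y => -g y) y = -pdv σ g y := by
    simp [pdv, fderiv_neg]
  simp only [Dc, h1, mul_neg, neg_mul]
  abel

lemma Dc_comm (hB : ∀ σ, ContDiff ℝ (⊤ : ℕ∞) (B σ)) (hf : ContDiff ℝ (⊤ : ℕ∞) f) :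
    Dc B ν (Dc B μ f) x - Dc B μ (Dc B ν f) x =
      (pdv μ (B ν) x - pdv ν (B μ) x - (B μ x * B ν x - B ν x * B μ x)) * f x
      - f x * (pdv μ (B ν) x - pdv ν (B μ) x - (B μ x * B ν x - B ν x * B μ x)) := by
  have da : ∀ (h : (Fin m → ℝ) → A), ContDiff ℝ (⊤ : ℕ∞) h → DifferentiableAt ℝ h x :=
    fun h hh => (hh.differentiable (by simp)).differentiableAt
  have expand : ∀ σ τ : Fin m,
      Dc B σ (Dc B τ f) x = pdv σ (pdv τ f) x
        - (B τ x * pdv σ f x + pdv σ (B τ) x * f x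
            - (f x * pdv σ (B τ) x + pdv σ f x * B τ x))
        - (B σ x * (pdv τ f x - (B τ x * f x - f x * B τ x))
            - (pdv τ f x - (B τ x * f x - f x * B τ x)) * B σ x) := by
    intro σ τ
    have h1 : pdv σ (Dc B τ f) x = pdv σ (pdv τ f) x
        - (B τ x * pdv σ f x + pdv σ (B τ) x * f x
            - (f x * pdv σ (B τ) x + pdv σ f x * B τ x)) := by
      have e1 : Dc B τ f = fun y => pdv τ f y - (B τ y * f y - f y * B τ y) := rfl
      rw [e1, pdv_sub (da _ (pdv_contDiff hf τ))
        (((da _ ((hB τ).mul hf)).fun_sub (da _ (hf.mul (hB τ))))),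
        pdv_sub (da _ ((hB τ).mul hf)) (da _ (hf.mul (hB τ))),
        pdv_mul (da _ (hB τ)) (da _ hf), pdv_mul (da _ hf) (da _ (hB τ))]
    show pdv σ (Dc B τ f) x - (B σ x * Dc B τ f x - Dc B τ f x * B σ x) = _
    rw [h1]
    rfl
  rw [expand, expand, pdv_comm hf (μ := μ) (ν := ν)]
  noncomm_ring

lemma Dc_sum_smul (hB : ∀ σ, ContDiff ℝ (⊤ : ℕ∞) (B σ)) (c : Fin m → ℝ)
    (G : Fin m → (Fin m → ℝ) → A) (hG : ∀ μ, ContDiff ℝ (⊤ : ℕ∞) (G μ)) (ν : Fin m) (x : Fin m → ℝ) :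
    Dc B ν (fun y => ∑ μ, c μ • G μ y) x = ∑ μ, c μ • Dc B ν (G μ) x := by
  have da : ∀ (h : (Fin m → ℝ) → A), ContDiff ℝ (⊤ : ℕ∞) h → DifferentiableAt ℝ h x :=
    fun h hh => (hh.differentiable (by simp)).differentiableAt
  have h1 : pdv ν (fun y => ∑ μ, c μ • G μ y) x = ∑ μ, c μ • pdv ν (G μ) x := by
    rw [pdv_sum Finset.univ (fun μ => fun y => c μ • G μ y)
      (fun μ _ => (da _ ((hG μ).const_smul (c μ))))]
    exact Finset.sum_congr rfl fun μ _ => pdv_smul (c μ) (da _ (hG μ))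
  show pdv ν (fun y => ∑ μ, c μ • G μ y) x
      - (B ν x * (∑ μ, c μ • G μ x) - (∑ μ, c μ • G μ x) * B ν x) = _
  rw [h1, Finset.mul_sum, Finset.sum_mul]
  rw [← Finset.sum_sub_distrib, ← Finset.sum_sub_distrib]
  refine Finset.sum_congr rfl fun μ _ => ?_
  rw [mul_smul_comm, smul_mul_assoc, ← smul_sub, ← smul_sub]
  rfl
end cov

/-- the non-Abelian conservation law Σ_ν (∂_ν J^ν − [B_ν, J^ν]) = 0. -/
theorem non_abelian_conservation_law {m : ℕ} {A : Type*}
    [NormedRing A] [NormedAlgebra ℝ A]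
    (ρ : Fin m → ℝ) (hρ : ∀ μ, ρ μ = 1 ∨ ρ μ = -1)
    (B : Fin m → (Fin m → ℝ) → A) (hB : ∀ μ, ContDiff ℝ (⊤ : ℕ∞) (B μ))
    (F : Fin m → Fin m → (Fin m → ℝ) → A)
    (hF : ∀ μ ν, F μ ν = fun y => pdv μ (B ν) y - pdv ν (B μ) y
        - (B μ y * B ν y - B ν y * B μ y))
    (J : Fin m → (Fin m → ℝ) → A)
    (hJ : ∀ ν, J ν = fun y => ∑ μ, (ρ μ * ρ ν) •
        (pdv μ (F μ ν) y - (B μ y * F μ ν y - F μ ν y * B μ y)))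
    (x : Fin m → ℝ) :
    ∑ ν, (pdv ν (J ν) x - (B ν x * J ν x - J ν x * B ν x)) = 0 := by
  have hFc : ∀ μ ν, ContDiff ℝ (⊤ : ℕ∞) (F μ ν) := by
    intro μ ν
    rw [hF]
    exact ((pdv_contDiff (hB ν) μ).sub (pdv_contDiff (hB μ) ν)).sub
      (((hB μ).mul (hB ν)).sub ((hB ν).mul (hB μ)))
  -- g μ ν := second covariant derivative
  set g : Fin m → Fin m → A := fun μ ν => Dc B ν (Dc B μ (F μ ν)) x with hg
  have hDJ : ∀ ν, Dc B ν (J ν) x = ∑ μ, (ρ μ * ρ ν) • g μ ν := by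
    intro ν
    rw [hJ ν]
    exact Dc_sum_smul hB (fun μ => ρ μ * ρ ν) (fun μ => Dc B μ (F μ ν))
      (fun μ => Dc_contDiff hB (hFc μ ν)) ν x
  -- antisymmetry of g
  have hanti : ∀ μ ν, g ν μ = -g μ ν := by
    intro μ ν
    have hFneg : F ν μ = fun y => -F μ ν y := by
      rw [hF, hF]; funext y; simp only [neg_sub]; abel
    have h1 : g ν μ = -Dc B μ (Dc B ν (F μ ν)) x := by
      rw [hg]
      simp only [hFneg, Dc_neg hB (hFc μ ν), Dc_neg hB (Dc_contDiff hB (hFc μ ν))]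
    have h2 : Dc B ν (Dc B μ (F μ ν)) x - Dc B μ (Dc B ν (F μ ν)) x
        = F μ ν x * F μ ν x - F μ ν x * F μ ν x := by
      have := Dc_comm (μ := μ) (ν := ν) (f := F μ ν) (x := x) hB (hFc μ ν)
      rw [this]
      have hFx : (pdv μ (B ν) x - pdv ν (B μ) x - (B μ x * B ν x - B ν x * B μ x))
          = F μ ν x := by rw [hF μ ν]
      rw [hFx]
    have h3 : Dc B ν (Dc B μ (F μ ν)) x = Dc B μ (Dc B ν (F μ ν)) x := by
      have h4 := h2; rw [sub_self] at h4; exact sub_eq_zero.mp h4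
    rw [h1, hg]
    simp only []
    rw [h3]
  -- assemble
  have hgoal : ∑ ν, (pdv ν (J ν) x - (B ν x * J ν x - J ν x * B ν x))
      = ∑ ν, ∑ μ, (ρ μ * ρ ν) • g μ ν := by
    refine Finset.sum_congr rfl fun ν _ => ?_
    exact hDJ ν
  rw [hgoal]
  set S : A := ∑ ν, ∑ μ, (ρ μ * ρ ν) • g μ ν with hS
  have hswap : S = -S := by
    calc S = ∑ μ, ∑ ν, (ρ μ * ρ ν) • g μ ν := Finset.sum_comm
    _ = ∑ ν, ∑ μ, (ρ ν * ρ μ) • g ν μ := rfl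
    _ = ∑ ν, ∑ μ, (ρ μ * ρ ν) • (-g μ ν) := by
        refine Finset.sum_congr rfl fun ν _ => Finset.sum_congr rfl fun μ _ => ?_
        rw [hanti μ ν, mul_comm]
    _ = -S := by rw [hS]; simp
  have h2S : (2 : ℝ) • S = 0 := by
    rw [two_smul]
    nth_rewrite 1 [hswap]
    exact neg_add_cancel S
  have := smul_eq_zero.mp h2S
  rcases this with h | h
  · norm_num at h
  · exact h
end

section
/- Constant-shift solutions (Theorem on σ, ε): let e^1,...,e^n be generators of Cl_{p,q} (constant, n = p+q ≥ 2) and σ ∈ ℝ. Define the constant fields B_μ := σ e_μ (identifying spacetime indices with Clifford indices, e_μ := η_{μν}e^ν) and F_{μν} := −σ²[e_μ, e_ν]. Then ∂_μ B_ν − ∂_ν B_μ − [B_μ, B_ν] = F_{μν} and Σ_μ(∂_μ F^{μν} − [B_μ, F^{μν}]) = ε e^ν with ε = 4(n−1)σ³. -/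
theorem pdv_const {m : ℕ} {A : Type*} [NormedAddCommGroup A] [NormedSpace ℝ A]
    (μ : Fin m) (c : A) (x : Fin m → ℝ) : pdv μ (fun _ => c) x = 0 := by
  simp [pdv]

-- The commutator Lie ring, so that `smul_lie` and `lie_smul` apply to `⁅x, y⁆ = x * y - y * x`.
attribute [local instance] LieRing.ofAssociativeRing

def CliffordRelations {ι A : Type*} [DecidableEq ι] [Ring A] [Algebra ℝ A]
    (η : ι → ℝ) (e : ι → A) : Prop :=
  ∀ a b, e a * e b + e b * e a = (2 * if a = b then η a else 0) • (1 : A)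

section Clifford

variable {ι A : Type*} [DecidableEq ι] [Ring A] [Algebra ℝ A] {η : ι → ℝ} {e : ι → A}

theorem CliffordRelations.mul_self (hrel : CliffordRelations η e) (a : ι) :
    e a * e a = η a • 1 := by
  have h := hrel a a
  rw [if_pos rfl, ← two_smul ℝ, mul_smul] at h
  exact smul_right_injective A two_ne_zero h

theorem CliffordRelations.lie_lie (hrel : CliffordRelations η e) (a b : ι) :
    ⁅e a, ⁅e a, e b⁆⁆ = (4 * η a) • e b - (4 * if a = b then η a else 0) • e a := by
  have haa := hrel.mul_self a
  have haab : e a * e a * e b = η a • e b := by rw [haa, smul_mul_assoc, one_mul]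
  have hbaa : e b * e a * e a = η a • e b := by rw [mul_assoc, haa, mul_smul_comm, mul_one]
  have haba : e a * e b * e a = (2 * if a = b then η a else 0) • e a - η a • e b := by
    rw [mul_assoc, eq_sub_of_add_eq' (hrel a b), mul_sub, ← mul_assoc, haa, mul_smul_comm,
      mul_one, smul_mul_assoc, one_mul]
  simp only [Ring.lie_def, mul_sub, sub_mul, ← mul_assoc, haab, hbaa, haba]
  module

theorem CliffordRelations.sum_smul_lie_lie [Fintype ι] (hrel : CliffordRelations η e)
    (hη : ∀ a, η a ^ 2 = 1) (b : ι) :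
    ∑ a, η a • ⁅e a, ⁅e a, e b⁆⁆ = (4 * ((Fintype.card ι : ℝ) - 1)) • e b := by
  have h4 (c : ι) : η c * (4 * η c) = 4 := by linear_combination 4 * hη c
  have hterm (a : ι) :
      η a • ⁅e a, ⁅e a, e b⁆⁆ = (4 : ℝ) • e b - if a = b then (4 : ℝ) • e b else 0 := by
    rw [hrel.lie_lie, smul_sub, smul_smul, smul_smul, h4]
    split_ifs with hab
    · rw [hab, h4]
    · rw [mul_zero, mul_zero, zero_smul]
  simp only [hterm, Finset.sum_sub_distrib, Finset.sum_ite_eq', Finset.mem_univ, if_true,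
    Finset.sum_const, Finset.card_univ, ← Nat.cast_smul_eq_nsmul ℝ, smul_smul, ← sub_smul]
  congr 1
  ring

end Clifford

theorem constant_shift_yang_mills_solution_general {p q : ℕ}
    {A : Type*} [NormedRing A] [NormedAlgebra ℝ A]
    (η : Fin (p + q) → ℝ) (hη : ∀ a, η a = if (a : ℕ) < p then 1 else -1)
    (e : Fin (p + q) → A)
    (hrel : ∀ a b, e a * e b + e b * e a = (2 * if a = b then η a else 0) • (1 : A))
    (σ : ℝ)
    (B : Fin (p + q) → (Fin (p + q) → ℝ) → A)
    (hB : ∀ μ, B μ = fun _ => σ • (η μ • e μ))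
    (F : Fin (p + q) → Fin (p + q) → (Fin (p + q) → ℝ) → A)
    (hF : ∀ μ ν, F μ ν = fun _ => (-(σ ^ 2)) •
        ((η μ • e μ) * (η ν • e ν) - (η ν • e ν) * (η μ • e μ))) :
    (∀ μ ν x, pdv μ (B ν) x - pdv ν (B μ) x
        - (B μ x * B ν x - B ν x * B μ x) = F μ ν x) ∧
    (∀ ν x, ∑ μ, (η μ * η ν) •
        (pdv μ (F μ ν) x - (B μ x * F μ ν x - F μ ν x * B μ x))
      = (4 * (((p + q : ℕ) : ℝ) - 1) * σ ^ 3) • e ν) := by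
  have hη_sq : ∀ a, η a ^ 2 = 1 := fun a => by rw [hη a]; split_ifs <;> norm_num
  simp only [← Ring.lie_def] at hF ⊢
  refine ⟨fun μ ν x => ?_, fun ν x => ?_⟩
  · simp only [hB, hF, pdv_const, smul_lie, lie_smul, smul_smul]
    module
  · have hterm (μ : Fin (p + q)) : (η μ * η ν) • (pdv μ (F μ ν) x - ⁅B μ x, F μ ν x⁆) =
        σ ^ 3 • η μ • ⁅e μ, ⁅e μ, e ν⁆⁆ := by
      simp only [hB, hF, pdv_const, smul_lie, lie_smul, smul_smul, zero_sub, ← neg_smul]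
      congr 1
      linear_combination σ ^ 3 * η μ ^ 3 * hη_sq ν + σ ^ 3 * η μ * hη_sq μ
    rw [Finset.sum_congr rfl fun μ _ => hterm μ, ← Finset.smul_sum,
      CliffordRelations.sum_smul_lie_lie hrel hη_sq, Fintype.card_fin, smul_smul, mul_comm]

/-- the constant fields B_μ = σ e_μ, F_{μν} = −σ²[e_μ, e_ν] solve the
Yang-Mills equations with current ε e^ν, ε = 4(n−1)σ³. -/
theorem constant_shift_yang_mills_solution {p q : ℕ} (hn : 2 ≤ p + q)
    {A : Type*} [NormedRing A] [NormedAlgebra ℝ A]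
    (η : Fin (p + q) → ℝ) (hη : ∀ a, η a = if (a : ℕ) < p then 1 else -1)
    (e : Fin (p + q) → A)
    (hrel : ∀ a b, e a * e b + e b * e a = (2 * if a = b then η a else 0) • (1 : A))
    (σ : ℝ)
    (B : Fin (p + q) → (Fin (p + q) → ℝ) → A)
    (hB : ∀ μ, B μ = fun _ => σ • (η μ • e μ))
    (F : Fin (p + q) → Fin (p + q) → (Fin (p + q) → ℝ) → A)
    (hF : ∀ μ ν, F μ ν = fun _ => (-(σ ^ 2)) •
        ((η μ • e μ) * (η ν • e ν) - (η ν • e ν) * (η μ • e μ))) :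
    (∀ μ ν x, pdv μ (B ν) x - pdv ν (B μ) x
        - (B μ x * B ν x - B ν x * B μ x) = F μ ν x) ∧
    (∀ ν x, ∑ μ, (η μ * η ν) •
        (pdv μ (F μ ν) x - (B μ x * F μ ν x - F μ ν x * B μ x))
      = (4 * (((p + q : ℕ) : ℝ) - 1) * σ ^ 3) • e ν) :=
  constant_shift_yang_mills_solution_general η hη e hrel σ B hB F hF
end
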